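/- arXiv:2010.02093 — 4 statements merged into one kernel-verified Lean document; each statement's English description precedes it below -/
import Mathlib

section
/- Let g = Σ_α g_α x^α be a nonzero Laurent polynomial in d variables over a field K, and let w, w' ∈ ℝ^d. Then init_{w'}(init_w(g)) = init_{w+tw'}(g) for all sufficiently small t > 0. -/
open scoped Classical

/-- The pairing `⟨w, a⟩ = ∑ wᵢ aᵢ` between a real vector and a lattice exponent. -/
noncomputable def pairZ {d : ℕ} (w : Fin d → ℝ) (a : Fin d → ℤ) : ℝ := ∑ i, w i * (a i : ℝ)

/-- The initial form `init_w(g)` of a Laurent polynomial (presented as a finitely supported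
function from exponents to coefficients): the subsum of terms whose exponent minimizes
`⟨w, ·⟩` over the support of `g`. -/
noncomputable def initForm {K : Type*} [Field K] {d : ℕ} (w : Fin d → ℝ)
    (g : (Fin d → ℤ) →₀ K) : (Fin d → ℤ) →₀ K :=
  g.filter (fun a => ∀ b ∈ g.support, pairZ w a ≤ pairZ w b)

lemma pairZ_add_smul {d : ℕ} (w w' : Fin d → ℝ) (t : ℝ) (a : Fin d → ℤ) :
    pairZ (fun i => w i + t * w' i) a = pairZ w a + t * pairZ w' a := by
  simp [pairZ, add_mul, Finset.sum_add_distrib, Finset.mul_sum, mul_assoc]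

/-- For a nonzero Laurent polynomial `g` in `d` variables and `w, w' ∈ ℝ^d`,
`init_{w'}(init_w(g)) = init_{w + t w'}(g)` for all sufficiently small `t > 0`. -/
theorem stmt2 {K : Type*} [Field K] {d : ℕ} (g : (Fin d → ℤ) →₀ K) (hg : g ≠ 0)
    (w w' : Fin d → ℝ) :
    ∃ t₀ : ℝ, 0 < t₀ ∧ ∀ t : ℝ, 0 < t → t < t₀ →
      initForm w' (initForm w g) = initForm (fun i => w i + t * w' i) g := by
  classical
  set S := g.support with hS
  have hSne : S.Nonempty := Finsupp.support_nonempty_iff.mpr hg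
  set f : (Fin d → ℤ) × (Fin d → ℤ) → ℝ := fun p =>
    if pairZ w p.1 < pairZ w p.2 then
      (pairZ w p.2 - pairZ w p.1) / max (pairZ w' p.1 - pairZ w' p.2) 1 else 1 with hf
  have hfpos : ∀ p, 0 < f p := by
    intro p
    simp only [hf]
    split
    · exact div_pos (by linarith) (lt_of_lt_of_le one_pos (le_max_right _ _))
    · exact one_pos
  refine ⟨min 1 ((S ×ˢ S).inf' (hSne.product hSne) f), ?_, ?_⟩
  · exact lt_min one_pos ((Finset.lt_inf'_iff _).mpr fun p _ => hfpos p)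
  intro t ht htlt
  have key : ∀ a ∈ S, ∀ b ∈ S, pairZ w a < pairZ w b →
      pairZ w a + t * pairZ w' a < pairZ w b + t * pairZ w' b := by
    intro a ha b hb hab
    have h1 : t < f (a, b) :=
      lt_of_lt_of_le htlt (le_trans (min_le_right _ _)
        (Finset.inf'_le _ (Finset.mem_product.mpr ⟨ha, hb⟩)))
    rw [hf] at h1
    simp only [if_pos hab] at h1
    have hD : (0:ℝ) < max (pairZ w' a - pairZ w' b) 1 :=
      lt_of_lt_of_le one_pos (le_max_right _ _)
    have h2 : t * max (pairZ w' a - pairZ w' b) 1 < pairZ w b - pairZ w a :=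
      (lt_div_iff₀ hD).mp h1
    have h3 : t * (pairZ w' a - pairZ w' b) ≤ t * max (pairZ w' a - pairZ w' b) 1 :=
      mul_le_mul_of_nonneg_left (le_max_left _ _) ht.le
    nlinarith
  -- predicates
  set P : (Fin d → ℤ) → Prop := fun a => ∀ b ∈ S, pairZ w a ≤ pairZ w b with hP
  have hsupp : (initForm w g).support = S.filter P := by
    rw [initForm, Finsupp.support_filter]
  have hQiff : ∀ a, (∀ b ∈ (initForm w g).support, pairZ w' a ≤ pairZ w' b) ↔
      (∀ b ∈ S, P b → pairZ w' a ≤ pairZ w' b) := by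
    intro a
    rw [hsupp]
    constructor
    · intro h b hb hPb; exact h b (Finset.mem_filter.mpr ⟨hb, hPb⟩)
    · intro h b hb; obtain ⟨hb1, hb2⟩ := Finset.mem_filter.mp hb; exact h b hb1 hb2
  have main : ∀ a ∈ S,
      ((P a ∧ ∀ b ∈ S, P b → pairZ w' a ≤ pairZ w' b) ↔
        (∀ b ∈ S, pairZ w a + t * pairZ w' a ≤ pairZ w b + t * pairZ w' b)) := by
    intro a ha
    constructor
    · rintro ⟨hPa, hQa⟩ b hb
      rcases lt_or_eq_of_le (hPa b hb) with hlt | heq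
      · exact (key a ha b hb hlt).le
      · have hPb : P b := by intro c hc; rw [← heq]; exact hPa c hc
        have := hQa b hb hPb
        nlinarith
    · intro hR
      have hPa : P a := by
        intro b hb
        by_contra hcon
        push_neg at hcon
        exact absurd (hR b hb) (not_le.mpr (key b hb a ha hcon))
      refine ⟨hPa, fun b hb hPb => ?_⟩
      have heq : pairZ w a = pairZ w b := le_antisymm (hPa b hb) (hPb a ha)
      have := hR b hb
      have : t * pairZ w' a ≤ t * pairZ w' b := by linarith
      exact le_of_mul_le_mul_left this ht
  ext a
  have happly : ∀ (v : Fin d → ℝ) (h : (Fin d → ℤ) →₀ K),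
      initForm v h a = if (∀ b ∈ h.support, pairZ v a ≤ pairZ v b) then h a else 0 := by
    intro v h
    rw [initForm, Finsupp.filter_apply]
  rw [happly, happly, happly]
  by_cases haS : a ∈ S
  · have hga : g a ≠ 0 := Finsupp.mem_support_iff.mp haS
    by_cases hR : ∀ b ∈ S, pairZ (fun i => w i + t * w' i) a ≤ pairZ (fun i => w i + t * w' i) b
    · have hR' : ∀ b ∈ S, pairZ w a + t * pairZ w' a ≤ pairZ w b + t * pairZ w' b := by
        intro b hb; have := hR b hb; rwa [pairZ_add_smul, pairZ_add_smul] at this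
      obtain ⟨hPa, hQa⟩ := (main a haS).mpr hR'
      rw [if_pos hR, if_pos ((hQiff a).mpr hQa)]
      exact if_pos hPa
    · have hR' : ¬ ∀ b ∈ S, pairZ w a + t * pairZ w' a ≤ pairZ w b + t * pairZ w' b := by
        intro h; apply hR; intro b hb
        rw [pairZ_add_smul, pairZ_add_smul]; exact h b hb
      rw [if_neg hR]
      have hnot := (not_iff_not.mpr (main a haS)).mpr hR'
      by_cases hPa : P a
      · have hQa : ¬ ∀ b ∈ S, P b → pairZ w' a ≤ pairZ w' b := fun h => hnot ⟨hPa, h⟩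
        rw [if_neg (fun h => hQa ((hQiff a).mp h))]
      · have h1 : (if ∀ b ∈ g.support, pairZ w a ≤ pairZ w b then g a else (0:K)) = 0 :=
          if_neg hPa
        rw [h1]
        exact ite_self 0
  · have hga : g a = 0 := Finsupp.notMem_support_iff.mp haS
    simp [hga]
end

section
/- Let I be an ideal of the Laurent polynomial ring over a field K, and let V(I) ⊆ (K*)^d be its zero set. If w ∈ ℝ^d is such that the initial ideal init_w(I) contains a monomial, then for every common zero ζ of I with coordinates in the nonzero generalized Puiseux series over K, val(ζ) ≠ w. (One direction of the Fundamental Theorem of Tropical Geometry: valuations of Puiseux-series points of V(I) lie in the tropical variety T(I).) -/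
/-!
Let `c ∈ (K^*)^d` be the vector of leading coefficients of `ζ`, and suppose `val ζ = w`. For a
nonzero `h`, let `m` be the minimal `w`-weight of a monomial of `h`: the monomials of weight `m`
are exactly those of `init_w(h)`, and each of them contributes its value at `c` to the coefficient
of `ε^m` in `h(ζ)`, while all others contribute nothing. So `h(ζ) = 0` forces `init_w(h)(c) = 0`,
evaluation at `c` kills the ideal generated by the initial forms, and it cannot contain a monomial.
-/

open scoped Classical

/-- Identify an element of the Laurent polynomial ring `AddMonoidAlgebra K (Fin d → ℤ)`
with its underlying finitely supported function. -/
def AMAtoF {K : Type*} [Field K] {d : ℕ} (f : AddMonoidAlgebra K (Fin d → ℤ)) :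
    (Fin d → ℤ) →₀ K := f.coeff

/-- Evaluation of a Laurent polynomial at a point of the torus over the field
`KK = K{{ε^ℝ}}` of generalized Puiseux series (Hahn series with real exponents). -/
noncomputable def laurentEval {K : Type*} [Field K] {d : ℕ}
    (ζ : Fin d → HahnSeries ℝ K) (f : AddMonoidAlgebra K (Fin d → ℤ)) : HahnSeries ℝ K :=
  ∑ a ∈ (AMAtoF f).support, HahnSeries.C ((AMAtoF f) a) * ∏ i, (ζ i) ^ (a i)

namespace HahnSeries

theorem coeff_eq_ite_of_le_order {Γ R : Type*} [LinearOrder Γ] [Zero Γ] [Zero R]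
    {y : HahnSeries Γ R} {g : Γ} (hg : g ≤ y.order) :
    y.coeff g = if y.order = g then y.leadingCoeff else 0 := by
  split_ifs with h
  · rw [leadingCoeff_eq, h]
  · exact coeff_eq_zero_of_lt_order (lt_of_le_of_ne hg (Ne.symm h))

variable {Γ R : Type*} [AddCommGroup Γ] [LinearOrder Γ] [IsOrderedAddMonoid Γ]

noncomputable def leadingCoeffHom [Semiring R] [NoZeroDivisors R] [Nontrivial R] :
    HahnSeries Γ R →*₀ R where
  toFun := leadingCoeff
  map_zero' := leadingCoeff_zero
  map_one' := leadingCoeff_one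
  map_mul' x y := leadingCoeff_mul x y

noncomputable def orderHom [Ring R] [IsDomain R] : (HahnSeries Γ R)ˣ →* Multiplicative Γ where
  toFun x := .ofAdd (x : HahnSeries Γ R).order
  map_one' := by simp
  map_mul' x y := by simp [order_mul x.ne_zero y.ne_zero]

variable [Field R] {ι : Type*} [Fintype ι] {x : ι → HahnSeries Γ R}

theorem order_prod_zpow (hx : ∀ i, x i ≠ 0) (a : ι → ℤ) :
    (∏ i, x i ^ a i).order = ∑ i, a i • (x i).order := by
  have h := map_prod orderHom (fun i => Units.mk0 (x i) (hx i) ^ a i) Finset.univ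
  simp only [map_zpow, orderHom, MonoidHom.coe_mk, OneHom.coe_mk, Units.coe_prod,
    Units.val_zpow_eq_zpow_val, Units.val_mk0] at h
  simpa using congrArg Multiplicative.toAdd h

theorem leadingCoeff_prod_zpow (a : ι → ℤ) :
    (∏ i, x i ^ a i).leadingCoeff = ∏ i, (x i).leadingCoeff ^ a i := by
  have h := map_prod (leadingCoeffHom (Γ := Γ) (R := R)) (fun i => x i ^ a i) Finset.univ
  simp only [map_zpow₀] at h
  exact h

end HahnSeries

section TorusEval

variable {K : Type*} [Field K] {d : ℕ}

def torusCharacter (c : Fin d → K) (hc : ∀ i, c i ≠ 0) :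
    Multiplicative (Fin d → ℤ) →* K where
  toFun a := ∏ i, c i ^ a.toAdd i
  map_one' := by simp
  map_mul' a b := by simp [zpow_add₀ (hc _), Finset.prod_mul_distrib]

noncomputable def torusEval (c : Fin d → K) (hc : ∀ i, c i ≠ 0) :
    AddMonoidAlgebra K (Fin d → ℤ) →ₐ[K] K :=
  AddMonoidAlgebra.lift K K (Fin d → ℤ) (torusCharacter c hc)

theorem torusEval_apply (c : Fin d → K) (hc : ∀ i, c i ≠ 0)
    (f : AddMonoidAlgebra K (Fin d → ℤ)) :
    torusEval c hc f = (AMAtoF f).sum fun a r => r * ∏ i, c i ^ a i :=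
  AddMonoidAlgebra.lift_apply _ _

end TorusEval

section Tropical

variable {K : Type*} [Field K] {d : ℕ}

theorem initForm_apply_of_mem {w : Fin d → ℝ} {F : (Fin d → ℤ) →₀ K} {b : Fin d → ℤ}
    (hb : b ∈ F.support) (hmin : ∀ a ∈ F.support, pairZ w b ≤ pairZ w a)
    {a : Fin d → ℤ} (ha : a ∈ F.support) :
    initForm w F a = if pairZ w a = pairZ w b then F a else 0 :=
  if_congr ⟨fun h => le_antisymm (h b hb) (hmin a ha), fun h b' hb' => h ▸ hmin b' hb'⟩
    rfl rfl

variable {ζ : Fin d → HahnSeries ℝ K} {w : Fin d → ℝ}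

theorem order_prod_zpow_eq_pairZ (hζ : ∀ i, ζ i ≠ 0) (hw : ∀ i, (ζ i).order = w i)
    (a : Fin d → ℤ) : (∏ i, ζ i ^ a i).order = pairZ w a := by
  simp [HahnSeries.order_prod_zpow hζ, pairZ, hw, mul_comm]

theorem torusEval_initForm_eq_coeff_laurentEval (hζ : ∀ i, ζ i ≠ 0)
    (hw : ∀ i, (ζ i).order = w i) {h : AddMonoidAlgebra K (Fin d → ℤ)} {b : Fin d → ℤ}
    (hb : b ∈ (AMAtoF h).support) (hmin : ∀ a ∈ (AMAtoF h).support, pairZ w b ≤ pairZ w a)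
    {g : AddMonoidAlgebra K (Fin d → ℤ)} (hg : AMAtoF g = initForm w (AMAtoF h)) :
    torusEval _ (fun i => HahnSeries.leadingCoeff_ne_zero.mpr (hζ i)) g =
      (laurentEval ζ h).coeff (pairZ w b) := by
  rw [torusEval_apply, hg, Finsupp.sum_of_support_subset _ (Finset.filter_subset _ _) _ (by simp),
    laurentEval, HahnSeries.coeff_sum]
  refine Finset.sum_congr rfl fun a ha => ?_
  have hord := order_prod_zpow_eq_pairZ hζ hw a
  rw [initForm_apply_of_mem hb hmin ha, HahnSeries.C_mul_eq_smul, HahnSeries.coeff_smul,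
    smul_eq_mul, HahnSeries.coeff_eq_ite_of_le_order (hord ▸ hmin a ha), hord,
    HahnSeries.leadingCoeff_prod_zpow]
  split_ifs <;> simp

theorem torusEval_initForm_eq_zero (hζ : ∀ i, ζ i ≠ 0) (hw : ∀ i, (ζ i).order = w i)
    {h : AddMonoidAlgebra K (Fin d → ℤ)} (hh : h ≠ 0) (hz : laurentEval ζ h = 0)
    {g : AddMonoidAlgebra K (Fin d → ℤ)} (hg : AMAtoF g = initForm w (AMAtoF h)) :
    torusEval _ (fun i => HahnSeries.leadingCoeff_ne_zero.mpr (hζ i)) g = 0 := by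
  have hsupp : (AMAtoF h).support.Nonempty := by simpa [AMAtoF] using hh
  obtain ⟨b, hb, hmin⟩ := Finset.exists_min_image _ (pairZ w) hsupp
  rw [torusEval_initForm_eq_coeff_laurentEval hζ hw hb hmin hg, hz, HahnSeries.coeff_zero]

end Tropical

theorem stmt3_general {K : Type*} [Field K] {d : ℕ}
    (I : Ideal (AddMonoidAlgebra K (Fin d → ℤ))) (w : Fin d → ℝ)
    (hmono : ∃ (a : Fin d → ℤ) (g : AddMonoidAlgebra K (Fin d → ℤ)),
      AMAtoF g = Finsupp.single a (1 : K) ∧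
      g ∈ Ideal.span {g' : AddMonoidAlgebra K (Fin d → ℤ) |
        ∃ h ∈ I, h ≠ 0 ∧ AMAtoF g' = initForm w (AMAtoF h)})
    (ζ : Fin d → HahnSeries ℝ K) (hζ : ∀ i, ζ i ≠ 0)
    (hzero : ∀ h ∈ I, laurentEval ζ h = 0) :
    (fun i => (ζ i).order) ≠ w := by
  intro hw
  obtain ⟨a, g, hg, hg_mem⟩ := hmono
  have hc : ∀ i, (ζ i).leadingCoeff ≠ 0 := fun i => HahnSeries.leadingCoeff_ne_zero.mpr (hζ i)
  have hg_zero : g ∈ RingHom.ker (torusEval _ hc) := by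
    refine Ideal.span_le.mpr ?_ hg_mem
    rintro g' ⟨h, hI, hh, hg'⟩
    exact torusEval_initForm_eq_zero hζ (congrFun hw) hh (hzero h hI) hg'
  rw [RingHom.mem_ker, torusEval_apply, hg, Finsupp.sum_single_index (zero_mul _), one_mul]
    at hg_zero
  exact Finset.prod_ne_zero_iff.mpr (fun i _ => zpow_ne_zero _ (hc i)) hg_zero

/-- one direction of the Fundamental Theorem of Tropical Geometry:
if the initial ideal `init_w(I)` contains a monomial, then no common zero `ζ` of `I`
with coordinates in the nonzero generalized Puiseux series has `val(ζ) = w`. -/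
theorem stmt3 {K : Type*} [Field K] [IsAlgClosed K] [CharZero K] {d : ℕ}
    (I : Ideal (AddMonoidAlgebra K (Fin d → ℤ))) (w : Fin d → ℝ)
    (hmono : ∃ (a : Fin d → ℤ) (g : AddMonoidAlgebra K (Fin d → ℤ)),
      AMAtoF g = Finsupp.single a (1 : K) ∧
      g ∈ Ideal.span {g' : AddMonoidAlgebra K (Fin d → ℤ) |
        ∃ h ∈ I, h ≠ 0 ∧ AMAtoF g' = initForm w (AMAtoF h)})
    (ζ : Fin d → HahnSeries ℝ K) (hζ : ∀ i, ζ i ≠ 0)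
    (hzero : ∀ h ∈ I, laurentEval ζ h = 0) :
    (fun i => (ζ i).order) ≠ w :=
  stmt3_general I w hmono ζ hζ hzero
end

section
/- Let I be a principal ideal of the Laurent polynomial ring generated by a Laurent polynomial h which is not a monomial. Then the tropical variety T(I) = {w ∈ ℝ^d : init_w(h) is not a monomial} equals the union of the cones of codimension at least one in the inner normal fan of the Newton polytope N(h); equivalently, w ∈ T(I) if and only if the face of N(h) minimizing ⟨w,·⟩ has at least two vertices. -/
open scoped Classical

noncomputable def dotR {d : ℕ} (w q : Fin d → ℝ) : ℝ := ∑ i, w i * q i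

/-- The embedding `ℤ^d → ℝ^d`. -/
noncomputable def latt {d : ℕ} (a : Fin d → ℤ) : Fin d → ℝ := fun i => (a i : ℝ)

/-- `face_w(Q)`: the face of a set `Q ⊆ ℝ^d` in direction `w`, i.e. the points of `Q`
minimizing `⟨w, ·⟩` over `Q`. -/
def faceSet {d : ℕ} (w : Fin d → ℝ) (Q : Set (Fin d → ℝ)) : Set (Fin d → ℝ) :=
  {q ∈ Q | ∀ p ∈ Q, dotR w q ≤ dotR w p}


/-! Grading the Laurent ring by the weight `⟨w, ·⟩`, write `p = init_w p + (higher terms)`. For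
`p, q ≠ 0` the product `init_w p * init_w q` is nonzero (the ring is a domain) and homogeneous of
weight `min_w p + min_w q`, while all other terms of `p * q` are heavier; hence
`init_w (p * q) = init_w p * init_w q` and `in_w ⟨h⟩ = ⟨init_w h⟩`. Since `ℤ^d` has two unique sums,
a divisor of a monomial is a monomial, so `in_w ⟨h⟩` contains a monomial iff `init_w h` is one.
The exponents of `init_w h` lie on the face of `N(h)` in direction `w`; when there is only one,
`a`, every other exponent of `h` has strictly larger weight, so `a` is the only point of `N(h)`
of minimal weight. -/

open Finset

namespace AddMonoidAlgebra

variable {R A : Type*} [Semiring R]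

lemma forall_mem_support_coeff_add {P : A → Prop} {x y : AddMonoidAlgebra R A}
    (hx : ∀ a ∈ x.coeff.support, P a) (hy : ∀ a ∈ y.coeff.support, P a) :
    ∀ a ∈ (x + y).coeff.support, P a := by
  intro a ha
  rw [coeff_add] at ha
  rcases mem_union.1 (Finsupp.support_add ha) with ha | ha
  exacts [hx a ha, hy a ha]

lemma forall_mem_support_coeff_mul [Add A] {P Q S : A → Prop}
    (hPQ : ∀ a b, P a → Q b → S (a + b)) {x y : AddMonoidAlgebra R A}
    (hx : ∀ a ∈ x.coeff.support, P a) (hy : ∀ b ∈ y.coeff.support, Q b) :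
    ∀ c ∈ (x * y).coeff.support, S c := by
  intro c hc
  obtain ⟨a, ha, b, hb, rfl⟩ := mem_add.1 (support_coeff_mul_subset x y hc)
  exact hPQ a b (hx a ha) (hy b hb)

/-- The two unique sums forced by `TwoUniqueSums` give two distinct monomials in `x * y` as soon as
`x` or `y` has two terms. -/
lemma card_support_coeff_eq_one_of_mul [NoZeroDivisors R] [Add A] [TwoUniqueSums A]
    {x y : AddMonoidAlgebra R A} (hxy : #(x * y).coeff.support = 1) :
    #x.coeff.support = 1 ∧ #y.coeff.support = 1 := by
  have hx : x.coeff.support.Nonempty := by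
    rw [Finsupp.support_nonempty_iff, Ne, coeff_eq_zero]
    rintro rfl
    simp at hxy
  have hy : y.coeff.support.Nonempty := by
    rw [Finsupp.support_nonempty_iff, Ne, coeff_eq_zero]
    rintro rfl
    simp at hxy
  suffices #x.coeff.support * #y.coeff.support ≤ 1 by
    have := card_pos.2 hx
    have := card_pos.2 hy
    constructor <;> nlinarith
  by_contra! hlt
  obtain ⟨p₁, hp₁, p₂, hp₂, hne, hu₁, hu₂⟩ := TwoUniqueSums.uniqueAdd_of_one_lt_card hlt
  have mem_support : ∀ p ∈ x.coeff.support ×ˢ y.coeff.support,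
      UniqueAdd x.coeff.support y.coeff.support p.1 p.2 → p.1 + p.2 ∈ (x * y).coeff.support := by
    intro p hp hu
    rw [Finsupp.mem_support_iff, coeff_mul_add_of_uniqueAdd hu]
    obtain ⟨h₁, h₂⟩ := mem_product.1 hp
    exact mul_ne_zero (Finsupp.mem_support_iff.1 h₁) (Finsupp.mem_support_iff.1 h₂)
  have hsum : p₁.1 + p₁.2 = p₂.1 + p₂.2 :=
    card_le_one.1 hxy.le _ (mem_support p₁ hp₁ hu₁) _ (mem_support p₂ hp₂ hu₂)
  obtain ⟨h₁, h₂⟩ := mem_product.1 hp₂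
  obtain ⟨e₁, e₂⟩ := hu₁ h₁ h₂ hsum.symm
  exact hne (Prod.ext e₁.symm e₂.symm)

lemma exists_mem_span_singleton_card_support_eq_one_iff [NoZeroDivisors R] [AddMonoid A]
    [TwoUniqueSums A] {p : AddMonoidAlgebra R A} :
    (∃ g ∈ Ideal.span {p}, #g.coeff.support = 1) ↔ #p.coeff.support = 1 := by
  refine ⟨fun ⟨g, hg, hg₁⟩ ↦ ?_, fun hp ↦ ⟨p, Ideal.mem_span_singleton_self p, hp⟩⟩
  obtain ⟨u, rfl⟩ := Ideal.mem_span_singleton'.1 hg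
  exact (card_support_coeff_eq_one_of_mul hg₁).2

end AddMonoidAlgebra

lemma LinearMap.eq_of_mem_convexHull_of_le {𝕜 E : Type*} [Field 𝕜] [LinearOrder 𝕜]
    [IsStrictOrderedRing 𝕜] [AddCommGroup E] [Module 𝕜 E] (ℓ : E →ₗ[𝕜] 𝕜) {t : Set E} {x q : E}
    (ht : ∀ y ∈ t, y ≠ x → ℓ x < ℓ y) (hq : q ∈ convexHull 𝕜 t) (hle : ℓ q ≤ ℓ x) : q = x := by
  replace hq := convexHull_mono (Set.subset_insert_sdiff_singleton x t) hq
  rcases (t \ {x}).eq_empty_or_nonempty with h | h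
  · rwa [h, insert_empty_eq, convexHull_singleton] at hq
  rw [convexHull_insert h, convexJoin_singleton_left, Set.mem_iUnion₂] at hq
  obtain ⟨y, hy, a, b, ha, hb, hab, rfl⟩ := hq
  obtain ⟨z, ⟨hzt, hzx⟩, hzy⟩ := (ℓ.concaveOn (convex_convexHull 𝕜 _)).exists_le_of_mem_convexHull
    (subset_convexHull 𝕜 _) hy
  have hxy : ℓ x < ℓ y := (ht z hzt hzx).trans_le hzy
  rw [map_add, map_smul, map_smul, smul_eq_mul, smul_eq_mul] at hle
  obtain rfl : b = 0 := by
    by_contra hb0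
    have := mul_pos (lt_of_le_of_ne hb (Ne.symm hb0)) (sub_pos.2 hxy)
    linarith [show a * ℓ x = ℓ x - b * ℓ x by linear_combination ℓ x * hab]
  obtain rfl : a = 1 := by simpa using hab
  simp

section InitialForm

variable {K : Type*} [Field K] {d : ℕ} (w : Fin d → ℝ)

lemma pairZ_add (a b : Fin d → ℤ) : pairZ w (a + b) = pairZ w a + pairZ w b := by
  simp [pairZ, mul_add, sum_add_distrib]

lemma latt_injective : Function.Injective (latt : (Fin d → ℤ) → Fin d → ℝ) :=
  fun _ _ h ↦ funext fun i ↦ Int.cast_injective (congrFun h i)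

lemma initForm_apply (g : (Fin d → ℤ) →₀ K) (a : Fin d → ℤ) :
    initForm w g a = if ∀ b ∈ g.support, pairZ w a ≤ pairZ w b then g a else 0 :=
  Finsupp.filter_apply _ _ _

lemma mem_support_initForm {g : (Fin d → ℤ) →₀ K} {a : Fin d → ℤ} :
    a ∈ (initForm w g).support ↔ a ∈ g.support ∧ ∀ b ∈ g.support, pairZ w a ≤ pairZ w b := by
  rw [initForm, Finsupp.support_filter, mem_filter]

lemma initForm_ne_zero {g : (Fin d → ℤ) →₀ K} (hg : g ≠ 0) : initForm w g ≠ 0 := by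
  obtain ⟨a, ha, hmin⟩ := g.support.exists_min_image (pairZ w) (Finsupp.support_nonempty_iff.2 hg)
  exact Finsupp.support_nonempty_iff.1 ⟨a, (mem_support_initForm w).2 ⟨ha, hmin⟩⟩

lemma exists_initForm_weight {g : (Fin d → ℤ) →₀ K} (hg : g ≠ 0) :
    ∃ t, (∀ a ∈ (initForm w g).support, pairZ w a = t) ∧
      ∀ a ∈ (g - initForm w g).support, t < pairZ w a := by
  obtain ⟨a₀, ha₀, hmin⟩ := g.support.exists_min_image (pairZ w) (Finsupp.support_nonempty_iff.2 hg)
  refine ⟨pairZ w a₀, fun a ha ↦ ?_, fun a ha ↦ ?_⟩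
  · obtain ⟨ha, hmin_a⟩ := (mem_support_initForm w).1 ha
    exact le_antisymm (hmin_a a₀ ha₀) (hmin a ha)
  · rw [Finsupp.mem_support_iff, Finsupp.sub_apply, initForm_apply] at ha
    split_ifs at ha with hmin_a
    · exact absurd (sub_self _) ha
    · push Not at hmin_a
      obtain ⟨b, hb, hlt⟩ := hmin_a
      exact (hmin b hb).trans_lt hlt

lemma initForm_eq_of_eq_add {g g₀ g₁ : (Fin d → ℤ) →₀ K} {t : ℝ} (hg : g = g₀ + g₁)
    (h₀ : g₀ ≠ 0) (hw₀ : ∀ a ∈ g₀.support, pairZ w a = t)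
    (hw₁ : ∀ a ∈ g₁.support, t < pairZ w a) : initForm w g = g₀ := by
  have eq_of_le : ∀ a, pairZ w a ≤ t → g a = g₀ a := fun a ha ↦ by
    rw [hg, Finsupp.add_apply, Finsupp.notMem_support_iff.1 fun h ↦ (hw₁ a h).not_ge ha, add_zero]
  have le_of_mem : ∀ b ∈ g.support, t ≤ pairZ w b := by
    intro b hb
    rcases mem_union.1 (Finsupp.support_add (hg ▸ hb)) with h | h
    exacts [(hw₀ b h).ge, (hw₁ b h).le]
  obtain ⟨a₀, ha₀⟩ := Finsupp.support_nonempty_iff.2 h₀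
  have ha₀g : a₀ ∈ g.support := by
    rw [Finsupp.mem_support_iff, eq_of_le a₀ (hw₀ a₀ ha₀).le]
    exact Finsupp.mem_support_iff.1 ha₀
  ext a
  rw [initForm_apply]
  by_cases ha : pairZ w a ≤ t
  · rw [if_pos fun b hb ↦ ha.trans (le_of_mem b hb), eq_of_le a ha]
  · push Not at ha
    rw [if_neg fun hmin ↦ (hmin a₀ ha₀g).not_gt (hw₀ a₀ ha₀ ▸ ha),
      Finsupp.notMem_support_iff.1 fun h ↦ ha.ne (hw₀ a h).symm]

noncomputable def initPart (p : AddMonoidAlgebra K (Fin d → ℤ)) : AddMonoidAlgebra K (Fin d → ℤ) :=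
  AddMonoidAlgebra.ofCoeff (initForm w (AMAtoF p))

lemma initPart_mul {p q : AddMonoidAlgebra K (Fin d → ℤ)} (hp : p ≠ 0) (hq : q ≠ 0) :
    initPart w (p * q) = initPart w p * initPart w q := by
  have hp' : AMAtoF p ≠ 0 := mt AddMonoidAlgebra.coeff_eq_zero.1 hp
  have hq' : AMAtoF q ≠ 0 := mt AddMonoidAlgebra.coeff_eq_zero.1 hq
  obtain ⟨s, hs₀, hs₁⟩ := exists_initForm_weight w hp'
  obtain ⟨t, ht₀, ht₁⟩ := exists_initForm_weight w hq'
  set ip := initPart w p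
  set iq := initPart w q
  have hrp : ∀ a ∈ (p - ip).coeff.support, s < pairZ w a := by
    rwa [AddMonoidAlgebra.coeff_sub]
  have hrq : ∀ a ∈ (q - iq).coeff.support, t < pairZ w a := by
    rwa [AddMonoidAlgebra.coeff_sub]
  have hsplit : p * q = ip * iq + (ip * (q - iq) + (p - ip) * iq + (p - ip) * (q - iq)) := by
    ring
  have hne : ip * iq ≠ 0 :=
    mul_ne_zero (mt AddMonoidAlgebra.coeff_eq_zero.2 (initForm_ne_zero w hp'))
      (mt AddMonoidAlgebra.coeff_eq_zero.2 (initForm_ne_zero w hq'))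
  refine AddMonoidAlgebra.coeff_injective (initForm_eq_of_eq_add w (t := s + t)
    (by rw [hsplit]; exact AddMonoidAlgebra.coeff_add _ _) (mt AddMonoidAlgebra.coeff_eq_zero.1 hne)
    ?_ ?_)
  · exact AddMonoidAlgebra.forall_mem_support_coeff_mul
      (fun a b (ha : _ = s) (hb : _ = t) ↦ by rw [pairZ_add, ha, hb]) hs₀ ht₀
  · refine AddMonoidAlgebra.forall_mem_support_coeff_add
      (AddMonoidAlgebra.forall_mem_support_coeff_add ?_ ?_) ?_
    · exact AddMonoidAlgebra.forall_mem_support_coeff_mul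
        (fun a b (ha : _ = s) (hb : t < _) ↦ by rw [pairZ_add, ha]; linarith) hs₀ hrq
    · exact AddMonoidAlgebra.forall_mem_support_coeff_mul
        (fun a b (ha : s < _) (hb : _ = t) ↦ by rw [pairZ_add, hb]; linarith) hrp ht₀
    · exact AddMonoidAlgebra.forall_mem_support_coeff_mul
        (fun a b (ha : s < _) (hb : t < _) ↦ by rw [pairZ_add]; linarith) hrp hrq

noncomputable def initialIdeal (I : Ideal (AddMonoidAlgebra K (Fin d → ℤ))) :
    Ideal (AddMonoidAlgebra K (Fin d → ℤ)) :=
  Ideal.span {g | ∃ f ∈ I, f ≠ 0 ∧ AMAtoF g = initForm w (AMAtoF f)}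

lemma initialIdeal_span_singleton {h : AddMonoidAlgebra K (Fin d → ℤ)} (hh : h ≠ 0) :
    initialIdeal w (Ideal.span {h}) = Ideal.span {initPart w h} := by
  refine le_antisymm ?_ ((Ideal.span_singleton_le_iff_mem _).2
    (Ideal.subset_span ⟨h, Ideal.mem_span_singleton_self h, hh, rfl⟩))
  rw [initialIdeal, Ideal.span_le]
  rintro g ⟨f, hf, hf0, hg⟩
  obtain ⟨u, rfl⟩ := Ideal.mem_span_singleton'.1 hf
  have hu : u ≠ 0 := by
    rintro rfl
    exact hf0 (zero_mul h)
  have : g = initPart w u * initPart w h := by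
    rw [← initPart_mul w hu hh]
    exact AddMonoidAlgebra.coeff_injective hg
  exact Ideal.mem_span_singleton'.2 ⟨_, this.symm⟩

lemma latt_mem_faceSet {g : (Fin d → ℤ) →₀ K} {a : Fin d → ℤ} (ha : a ∈ (initForm w g).support) :
    latt a ∈ faceSet w (convexHull ℝ (latt '' g.support)) := by
  obtain ⟨ha, hmin⟩ := (mem_support_initForm w).1 ha
  refine ⟨subset_convexHull ℝ _ ⟨a, ha, rfl⟩, fun q hq ↦ ?_⟩
  obtain ⟨_, ⟨b, hb, rfl⟩, hbq⟩ := ((dotProductBilin ℝ ℝ w).concaveOn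
    (convex_convexHull ℝ _)).exists_le_of_mem_convexHull (subset_convexHull ℝ _) hq
  exact (hmin b hb).trans hbq

lemma faceSet_subset_singleton {g : (Fin d → ℤ) →₀ K} {a : Fin d → ℤ}
    (ha : (initForm w g).support = {a}) :
    faceSet w (convexHull ℝ (latt '' g.support)) ⊆ {latt a} := by
  obtain ⟨ha_mem, hmin⟩ := (mem_support_initForm w).1 (ha ▸ mem_singleton_self a)
  rintro q ⟨hq, hq_min⟩
  refine (dotProductBilin ℝ ℝ w).eq_of_mem_convexHull_of_le ?_ hq
    (hq_min _ (subset_convexHull ℝ _ ⟨a, ha_mem, rfl⟩))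
  rintro _ ⟨b, hb, rfl⟩ hba
  have : b ∉ (initForm w g).support := by
    rw [ha, mem_singleton]
    rintro rfl
    exact hba rfl
  simp only [mem_support_initForm, not_and, not_forall, not_le] at this
  obtain ⟨b', hb', hlt⟩ := this hb
  exact (hmin b' hb').trans_lt hlt

lemma card_support_initForm_eq_one_iff {g : (Fin d → ℤ) →₀ K} (hg : g ≠ 0) :
    #(initForm w g).support = 1 ↔ (faceSet w (convexHull ℝ (latt '' g.support))).Subsingleton := by
  refine ⟨fun h ↦ ?_, fun h ↦ le_antisymm ?_ ?_⟩
  · obtain ⟨a, ha⟩ := card_eq_one.1 h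
    exact Set.subsingleton_singleton.anti (faceSet_subset_singleton w ha)
  · exact card_le_one.2 fun a ha b hb ↦
      latt_injective (h (latt_mem_faceSet w ha) (latt_mem_faceSet w hb))
  · exact card_pos.2 (Finsupp.support_nonempty_iff.2 (initForm_ne_zero w hg))

end InitialForm

theorem stmt4_general {K : Type*} [Field K] {d : ℕ} (h : AddMonoidAlgebra K (Fin d → ℤ))
    (hh0 : h ≠ 0)
    (w : Fin d → ℝ) :
    ((¬ ∃ (a : Fin d → ℤ) (c : K) (g : AddMonoidAlgebra K (Fin d → ℤ)), c ≠ 0 ∧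
        AMAtoF g = Finsupp.single a c ∧
        g ∈ Ideal.span {g' : AddMonoidAlgebra K (Fin d → ℤ) |
          ∃ f ∈ Ideal.span {h}, f ≠ 0 ∧ AMAtoF g' = initForm w (AMAtoF f)}) ↔
      ¬ ∃ (a : Fin d → ℤ) (c : K), c ≠ 0 ∧ initForm w (AMAtoF h) = Finsupp.single a c) ∧
    ((¬ ∃ (a : Fin d → ℤ) (c : K), c ≠ 0 ∧ initForm w (AMAtoF h) = Finsupp.single a c) ↔
      ¬ (faceSet w (convexHull ℝ (latt '' ((AMAtoF h).support : Set (Fin d → ℤ))))).Subsingleton) := by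
  have hJ := initialIdeal_span_singleton w hh0
  rw [initialIdeal] at hJ
  rw [hJ, ← Finsupp.card_support_eq_one']
  refine ⟨not_congr (Iff.trans ⟨?_, ?_⟩
      AddMonoidAlgebra.exists_mem_span_singleton_card_support_eq_one_iff),
    not_congr (card_support_initForm_eq_one_iff w (mt AddMonoidAlgebra.coeff_eq_zero.1 hh0))⟩
  · rintro ⟨a, c, g, hc, hg, hgJ⟩
    exact ⟨g, hgJ, Finsupp.card_support_eq_one'.2 ⟨a, c, hc, hg⟩⟩
  · rintro ⟨g, hgJ, hg⟩
    obtain ⟨a, c, hc, hg⟩ := Finsupp.card_support_eq_one'.1 hg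
    exact ⟨a, c, g, hc, hg, hgJ⟩

/-- For the principal ideal generated by a Laurent polynomial `h` which is not
a monomial, membership of `w` in the tropical variety `T(⟨h⟩)` (i.e. `init_w⟨h⟩` contains no
monomial) is equivalent to `init_w(h)` not being a monomial, which in turn is equivalent to
the face of the Newton polytope `N(h)` in direction `w` having at least two points. -/
theorem stmt4 {K : Type*} [Field K] {d : ℕ} (h : AddMonoidAlgebra K (Fin d → ℤ))
    (hh0 : h ≠ 0)
    (hmono : ¬ ∃ (a : Fin d → ℤ) (c : K), AMAtoF h = Finsupp.single a c)
    (w : Fin d → ℝ) :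
    ((¬ ∃ (a : Fin d → ℤ) (c : K) (g : AddMonoidAlgebra K (Fin d → ℤ)), c ≠ 0 ∧
        AMAtoF g = Finsupp.single a c ∧
        g ∈ Ideal.span {g' : AddMonoidAlgebra K (Fin d → ℤ) |
          ∃ f ∈ Ideal.span {h}, f ≠ 0 ∧ AMAtoF g' = initForm w (AMAtoF f)}) ↔
      ¬ ∃ (a : Fin d → ℤ) (c : K), c ≠ 0 ∧ initForm w (AMAtoF h) = Finsupp.single a c) ∧
    ((¬ ∃ (a : Fin d → ℤ) (c : K), c ≠ 0 ∧ initForm w (AMAtoF h) = Finsupp.single a c) ↔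
      ¬ (faceSet w (convexHull ℝ (latt '' ((AMAtoF h).support : Set (Fin d → ℤ))))).Subsingleton) :=
  stmt4_general h hh0 w
end

section
/- (Containment direction of the main theorem) Let f₀, …, f_n ∈ K[x₁,…,x_d] be nonzero polynomials with supports A₀, …, A_n ⊂ (ℤ_{≥0})^d, and let ff = (f₁/f₀, …, f_n/f₀). For every σ ∈ (KK*)^d with all fᵢ(σ) ≠ 0, the valuation vector val(ff(σ)) ∈ ℝ^n lies in one of the cones C_J = {ψ(α) + u : α ∈ τ_J, u ∈ (ℝ_{≥0})^J} (for 0 ∉ J), or C_J = {ψ(α) + u − λ·(1,…,1) : α ∈ τ_J, u ∈ (ℝ_{≥0})^{J∖{0}}, λ ≥ 0} (for 0 ∈ J), where J is the set of indices i for which init_α(fᵢ) vanishes at the initial coefficient vector of σ and α = val(σ). Here τ_J = {α : dim(Σ_{j∈K} face_α(conv(Aⱼ))) ≥ |K| for all K ⊆ J}. -/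
open scoped Classical
open Pointwise

/-- `m_α(f)`: the minimum of `⟨α, q⟩` over the support of the polynomial `f`. -/
noncomputable def mPoly {K : Type*} [CommRing K] {d : ℕ} (α : Fin d → ℝ)
    (f : MvPolynomial (Fin d) K) : ℝ :=
  sInf ((fun q : Fin d →₀ ℕ => ∑ i, α i * (q i : ℝ)) '' (f.support : Set (Fin d →₀ ℕ)))

/-- The initial form `init_α(f)`. -/
noncomputable def initMv {K : Type*} [CommRing K] {d : ℕ} (α : Fin d → ℝ)
    (f : MvPolynomial (Fin d) K) : MvPolynomial (Fin d) K :=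
  ∑ q ∈ f.support.filter
      (fun q => ∀ p ∈ f.support, (∑ i, α i * (q i : ℝ)) ≤ ∑ i, α i * (p i : ℝ)),
    MvPolynomial.monomial q (MvPolynomial.coeff q f)

/-- `face_α` of the support of `f`, as a subset of `ℝ^d`. -/
noncomputable def facePts {K : Type*} [CommRing K] {d : ℕ} (α : Fin d → ℝ)
    (f : MvPolynomial (Fin d) K) : Set (Fin d → ℝ) :=
  (fun q : Fin d →₀ ℕ => fun i => (q i : ℝ)) ''
    {q | q ∈ f.support ∧ ∀ p ∈ f.support,
      (∑ i, α i * (q i : ℝ)) ≤ ∑ i, α i * (p i : ℝ)}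

/-- `(ℝ_{≥0})^J ⊆ ℝ^n`, coordinate `j : Fin n` corresponding to label `j.succ ∈ {0,…,n}`. -/
def orthantJ {n : ℕ} (J : Finset (Fin (n + 1))) : Set (Fin n → ℝ) :=
  {u | ∀ j : Fin n, 0 ≤ u j ∧ (j.succ ∉ J → u j = 0)}

/-!
Write `fᵢ(σ) = ∑_q c_q σ^q`. Each `σ^q` has valuation `⟨α, q⟩` and initial coefficient `b^q`,
so every coefficient of `fᵢ(σ)` below `m_α(Aᵢ)` vanishes and the coefficient at `m_α(Aᵢ)` is
`init_α(fᵢ)(b)`. Hence `val fᵢ(σ) ≥ m_α(Aᵢ)`, with equality for `i ∉ J`. The excesses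
`val fᵢ(σ) - m_α(Aᵢ)` for `i ≥ 1` form the orthant vector `u`, and the excess at `i = 0` is `λ`.
-/

namespace HahnSeries

variable {Γ R ι : Type*} [AddCommMonoid Γ] [LinearOrder Γ] [IsOrderedCancelAddMonoid Γ]

theorem leadingCoeff_pow [Semiring R] [NoZeroDivisors R] (x : R⟦Γ⟧) (n : ℕ) :
    (x ^ n).leadingCoeff = x.leadingCoeff ^ n := by
  induction n with
  | zero => simp
  | succ n ih => rw [pow_succ, leadingCoeff_mul, ih, pow_succ]

variable [CommRing R] [IsDomain R]

theorem leadingCoeff_prod (s : Finset ι) (x : ι → R⟦Γ⟧) :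
    (∏ i ∈ s, x i).leadingCoeff = ∏ i ∈ s, (x i).leadingCoeff := by
  induction s using Finset.induction_on with
  | empty => simp
  | insert a s ha ih => rw [Finset.prod_insert ha, Finset.prod_insert ha, leadingCoeff_mul, ih]

theorem order_prod {s : Finset ι} {x : ι → R⟦Γ⟧} (hx : ∀ i ∈ s, x i ≠ 0) :
    (∏ i ∈ s, x i).order = ∑ i ∈ s, (x i).order := by
  induction s using Finset.induction_on with
  | empty => simp
  | insert a s ha ih =>
    rw [Finset.forall_mem_insert] at hx
    rw [Finset.prod_insert ha, Finset.sum_insert ha,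
      order_mul hx.1 (Finset.prod_ne_zero_iff.2 hx.2), ih hx.2]

end HahnSeries

section Valuation

open MvPolynomial HahnSeries

variable {K : Type*} [Field K] {d : ℕ}

def weight (α : Fin d → ℝ) (q : Fin d →₀ ℕ) : ℝ := ∑ i, α i * q i

theorem mPoly_le_weight (α : Fin d → ℝ) {g : MvPolynomial (Fin d) K} {q : Fin d →₀ ℕ}
    (hq : q ∈ g.support) : mPoly α g ≤ weight α q :=
  csInf_le ((g.support.finite_toSet.image _).bddBelow) ⟨q, hq, rfl⟩

theorem exists_weight_eq_mPoly (α : Fin d → ℝ) {g : MvPolynomial (Fin d) K} (hg : g ≠ 0) :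
    ∃ q ∈ g.support, weight α q = mPoly α g :=
  ((Finset.coe_nonempty.2 (support_nonempty.2 hg)).image _).csInf_mem
    (g.support.finite_toSet.image _)

theorem forall_weight_le_iff_eq_mPoly (α : Fin d → ℝ) {g : MvPolynomial (Fin d) K} {q : Fin d →₀ ℕ}
    (hq : q ∈ g.support) :
    (∀ p ∈ g.support, weight α q ≤ weight α p) ↔ weight α q = mPoly α g := by
  refine ⟨fun h => ?_, fun h p hp => h ▸ mPoly_le_weight α hp⟩
  obtain ⟨p, hp, hpm⟩ := exists_weight_eq_mPoly α (ne_zero_iff.2 ⟨q, mem_support_iff.1 hq⟩)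
  exact le_antisymm (hpm ▸ h p hp) (mPoly_le_weight α hq)

variable (σ : Fin d → HahnSeries ℝ K) {α : Fin d → ℝ} {b : Fin d → K}

theorem coeff_aeval_monomial (q : Fin d →₀ ℕ) (c : K) (x : ℝ) :
    (aeval σ (monomial q c)).coeff x = c * (∏ i, σ i ^ q i).coeff x := by
  rw [aeval_monomial, Finsupp.prod_fintype _ _ fun i => pow_zero _]
  simp [HahnSeries.algebraMap_apply']

theorem coeff_aeval (g : MvPolynomial (Fin d) K) (x : ℝ) :
    (aeval σ g).coeff x = ∑ q ∈ g.support, (aeval σ (monomial q (g.coeff q))).coeff x := by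
  conv_lhs => rw [g.as_sum, map_sum]
  exact coeff_sum x

variable {σ} (hσ : ∀ i, σ i ≠ 0) (hα : ∀ i, (σ i).order = α i)
  (hb : ∀ i, (σ i).coeff (α i) = b i)
include hσ hα

theorem order_prod_pow (q : Fin d →₀ ℕ) : (∏ i, σ i ^ q i).order = weight α q := by
  rw [order_prod fun i _ => pow_ne_zero _ (hσ i)]
  simp only [order_pow, nsmul_eq_mul, hα, weight, mul_comm]

theorem coeff_aeval_monomial_of_lt (q : Fin d →₀ ℕ) (c : K) {x : ℝ} (hx : x < weight α q) :
    (aeval σ (monomial q c)).coeff x = 0 := by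
  rw [coeff_aeval_monomial, coeff_eq_zero_of_lt_order (order_prod_pow hσ hα q ▸ hx), mul_zero]

theorem coeff_aeval_of_lt_mPoly (g : MvPolynomial (Fin d) K) {x : ℝ} (hx : x < mPoly α g) :
    (aeval σ g).coeff x = 0 := by
  rw [coeff_aeval]
  exact Finset.sum_eq_zero fun q hq =>
    coeff_aeval_monomial_of_lt hσ hα q _ (hx.trans_le (mPoly_le_weight α hq))

theorem mPoly_le_order_aeval {g : MvPolynomial (Fin d) K} (hg : aeval σ g ≠ 0) :
    mPoly α g ≤ (aeval σ g).order := by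
  by_contra! h
  exact leadingCoeff_ne_zero.2 hg (leadingCoeff_eq.trans (coeff_aeval_of_lt_mPoly hσ hα g h))

include hb

theorem coeff_aeval_monomial_weight (q : Fin d →₀ ℕ) (c : K) :
    (aeval σ (monomial q c)).coeff (weight α q) = eval b (monomial q c) := by
  rw [coeff_aeval_monomial, ← order_prod_pow hσ hα, ← leadingCoeff_eq, leadingCoeff_prod,
    eval_monomial, Finsupp.prod_fintype _ _ fun i => pow_zero _]
  congr 1
  exact Finset.prod_congr rfl fun i _ => by rw [leadingCoeff_pow, leadingCoeff_eq, hα, hb]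

theorem coeff_aeval_mPoly (g : MvPolynomial (Fin d) K) :
    (aeval σ g).coeff (mPoly α g) = eval b (initMv α g) := by
  rw [coeff_aeval, initMv, map_sum, Finset.sum_filter]
  refine Finset.sum_congr rfl fun q hq => ?_
  change _ = if ∀ p ∈ g.support, weight α q ≤ weight α p then _ else _
  by_cases h : weight α q = mPoly α g
  · rw [if_pos ((forall_weight_le_iff_eq_mPoly α hq).2 h), ← h, coeff_aeval_monomial_weight hσ hα hb]
  · rw [if_neg (mt (forall_weight_le_iff_eq_mPoly α hq).1 h)]
    exact coeff_aeval_monomial_of_lt hσ hα q _ ((mPoly_le_weight α hq).lt_of_ne (Ne.symm h))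

theorem order_aeval_eq_mPoly {g : MvPolynomial (Fin d) K} (hg : aeval σ g ≠ 0)
    (hinit : eval b (initMv α g) ≠ 0) : (aeval σ g).order = mPoly α g :=
  le_antisymm (order_le_of_coeff_ne_zero (coeff_aeval_mPoly hσ hα hb g ▸ hinit))
    (mPoly_le_order_aeval hσ hα hg)

end Valuation

theorem orthantJ_erase_zero {n : ℕ} (J : Finset (Fin (n + 1))) :
    orthantJ (J.erase 0) = orthantJ J := by
  simp [orthantJ, Fin.succ_ne_zero]

theorem stmt18_general {K : Type*} [Field K] {d n : ℕ}
    (f : Fin (n + 1) → MvPolynomial (Fin d) K)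
    (σ : Fin d → HahnSeries ℝ K) (hσ : ∀ i, σ i ≠ 0)
    (α : Fin d → ℝ) (hα : ∀ i, (σ i).order = α i)
    (b : Fin d → K) (hb : ∀ i, (σ i).coeff (α i) = b i)
    (hfσ : ∀ i, MvPolynomial.aeval σ (f i) ≠ 0)
    (J : Finset (Fin (n + 1)))
    (hJ : J = Finset.univ.filter (fun i => MvPolynomial.eval b (initMv α (f i)) = 0)) :
    (0 ∉ J → ∃ u ∈ orthantJ J,
      (fun i : Fin n => (MvPolynomial.aeval σ (f i.succ)).order -
        (MvPolynomial.aeval σ (f 0)).order) =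
      (fun i : Fin n => mPoly α (f i.succ) - mPoly α (f 0)) + u) ∧
    (0 ∈ J → ∃ u ∈ orthantJ (J.erase 0), ∃ l : ℝ, 0 ≤ l ∧
      (fun i : Fin n => (MvPolynomial.aeval σ (f i.succ)).order -
        (MvPolynomial.aeval σ (f 0)).order) =
      (fun i : Fin n => mPoly α (f i.succ) - mPoly α (f 0)) + u - l • (1 : Fin n → ℝ)) := by
  have hle : ∀ i, mPoly α (f i) ≤ (MvPolynomial.aeval σ (f i)).order := fun i =>
    mPoly_le_order_aeval hσ hα (hfσ i)
  have heq : ∀ i ∉ J, (MvPolynomial.aeval σ (f i)).order = mPoly α (f i) := fun i hi =>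
    order_aeval_eq_mPoly hσ hα hb (hfσ i) (by simpa [hJ] using hi)
  have hu : (fun j : Fin n => (MvPolynomial.aeval σ (f j.succ)).order - mPoly α (f j.succ)) ∈
      orthantJ J := fun j => ⟨sub_nonneg.2 (hle _), fun hj => sub_eq_zero.2 (heq _ hj)⟩
  refine ⟨fun h0 => ⟨_, hu, ?_⟩, fun _ => ⟨_, orthantJ_erase_zero J ▸ hu,
    (MvPolynomial.aeval σ (f 0)).order - mPoly α (f 0), sub_nonneg.2 (hle 0), ?_⟩⟩
  · funext j
    simp only [Pi.add_apply, heq 0 h0]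
    ring
  · funext j
    simp only [Pi.add_apply, Pi.sub_apply, Pi.smul_apply, Pi.one_apply, smul_eq_mul, mul_one]
    ring

/-- containment direction of the main theorem: let `σ ∈ (KK*)^d` with
`α = val(σ)` and initial coefficient vector `b`, with all `fᵢ(σ) ≠ 0`.  Let `J` be the set
of indices `i` with `init_α(fᵢ)(b) = 0`, and assume `α ∈ τ_J` (every subfamily of faces
indexed by `K ⊆ J` has `dim(∑ face_α(conv A_j)) ≥ |K|`).  Then the valuation vector
`val(ff(σ)) = (val f₁(σ) − val f₀(σ), …)` lies in the cone `C_J`: it equals `ψ(α) + u`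
with `u ∈ (ℝ_{≥0})^J` if `0 ∉ J`, and `ψ(α) + u − λ·(1,…,1)` with `u ∈ (ℝ_{≥0})^{J∖{0}}`,
`λ ≥ 0`, if `0 ∈ J`. -/
theorem stmt18 {K : Type*} [Field K] [IsAlgClosed K] [CharZero K] {d n : ℕ}
    (f : Fin (n + 1) → MvPolynomial (Fin d) K) (hf : ∀ i, f i ≠ 0)
    (σ : Fin d → HahnSeries ℝ K) (hσ : ∀ i, σ i ≠ 0)
    (α : Fin d → ℝ) (hα : ∀ i, (σ i).order = α i)
    (b : Fin d → K) (hb : ∀ i, (σ i).coeff (α i) = b i) (hbne : ∀ i, b i ≠ 0)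
    (hfσ : ∀ i, MvPolynomial.aeval σ (f i) ≠ 0)
    (J : Finset (Fin (n + 1)))
    (hJ : J = Finset.univ.filter (fun i => MvPolynomial.eval b (initMv α (f i)) = 0))
    (hτ : ∀ S ⊆ J, S.card ≤ Module.finrank ℝ (vectorSpan ℝ
      (∑ j ∈ S, convexHull ℝ (facePts α (f j))))) :
    (0 ∉ J → ∃ u ∈ orthantJ J,
      (fun i : Fin n => (MvPolynomial.aeval σ (f i.succ)).order -
        (MvPolynomial.aeval σ (f 0)).order) =
      (fun i : Fin n => mPoly α (f i.succ) - mPoly α (f 0)) + u) ∧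
    (0 ∈ J → ∃ u ∈ orthantJ (J.erase 0), ∃ l : ℝ, 0 ≤ l ∧
      (fun i : Fin n => (MvPolynomial.aeval σ (f i.succ)).order -
        (MvPolynomial.aeval σ (f 0)).order) =
      (fun i : Fin n => mPoly α (f i.succ) - mPoly α (f 0)) + u - l • (1 : Fin n → ℝ)) :=
  stmt18_general f σ hσ α hα b hb hfσ J hJ
end
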